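/- arXiv:1004.0946 — 4 statements merged into one kernel-verified Lean document; each statement's English description precedes it below -/
import Mathlib

section
/- For any μ ∈ V_n and any α ∈ gl(n,ℝ), one has tr(Ric_μ α) = -¼ ⟨δ_μ(α), μ⟩, i.e. δ_μᵀ(μ) = -4 Ric_μ where δ_μᵀ is the adjoint of δ_μ with respect to the inner products ⟨α,β⟩ = tr(αβᵀ) on gl(n,ℝ) and ⟨μ,λ⟩ = Σ ⟨μ(eᵢ,eⱼ), λ(eᵢ,eⱼ)⟩ on V_n. -/
open Matrix BigOperators

noncomputable section

/-- An element of `V_n`: a skew-symmetric bilinear map `μ : ℝⁿ × ℝⁿ → ℝⁿ`. -/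
def IsSkewBil {n : ℕ} (μ : (Fin n → ℝ) → (Fin n → ℝ) → (Fin n → ℝ)) : Prop :=
  (∀ x, IsLinearMap ℝ (μ x)) ∧ (∀ y, IsLinearMap ℝ (fun x => μ x y)) ∧
  (∀ x y, μ x y = - μ y x)

/-- The matrix of `ad_μ x : y ↦ μ(x,y)` in the canonical basis. -/
def adMat {n : ℕ} (μ : (Fin n → ℝ) → (Fin n → ℝ) → (Fin n → ℝ)) (x : Fin n → ℝ) :
    Matrix (Fin n) (Fin n) ℝ := fun i j => μ x (Pi.single j 1) i

/-- The Ricci operator `Ric_μ = -½ Σᵢ (ad_μ eᵢ)ᵀ(ad_μ eᵢ) + ¼ Σᵢ (ad_μ eᵢ)(ad_μ eᵢ)ᵀ`. -/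
def Ric {n : ℕ} (μ : (Fin n → ℝ) → (Fin n → ℝ) → (Fin n → ℝ)) :
    Matrix (Fin n) (Fin n) ℝ :=
  (-(1/2 : ℝ)) • ∑ i, (adMat μ (Pi.single i 1))ᵀ * adMat μ (Pi.single i 1)
  + (1/4 : ℝ) • ∑ i, adMat μ (Pi.single i 1) * (adMat μ (Pi.single i 1))ᵀ

/-- `δ_μ(α)(x,y) = μ(αx,y) + μ(x,αy) - αμ(x,y)`. -/
def deltaMap {n : ℕ} (μ : (Fin n → ℝ) → (Fin n → ℝ) → (Fin n → ℝ))
    (A : Matrix (Fin n) (Fin n) ℝ) : (Fin n → ℝ) → (Fin n → ℝ) → (Fin n → ℝ) :=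
  fun x y => μ (A.mulVec x) y + μ x (A.mulVec y) - A.mulVec (μ x y)

/-- The inner product `⟨μ,ν⟩ = Σ_{i,j} ⟨μ(eᵢ,eⱼ), ν(eᵢ,eⱼ)⟩` on `V_n`. -/
def innV {n : ℕ} (μ ν : (Fin n → ℝ) → (Fin n → ℝ) → (Fin n → ℝ)) : ℝ :=
  ∑ i, ∑ j, ∑ k,
    μ (Pi.single i 1) (Pi.single j 1) k * ν (Pi.single i 1) (Pi.single j 1) k

/-- `D` is a derivation of the algebra `(ℝⁿ, μ)`. -/
def IsDeriv {n : ℕ} (μ : (Fin n → ℝ) → (Fin n → ℝ) → (Fin n → ℝ))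
    (D : Matrix (Fin n) (Fin n) ℝ) : Prop :=
  ∀ x y, D.mulVec (μ x y) = μ (D.mulVec x) y + μ x (D.mulVec y)

/-- The Jacobi identity. -/
def IsJacobi {n : ℕ} (μ : (Fin n → ℝ) → (Fin n → ℝ) → (Fin n → ℝ)) : Prop :=
  ∀ x y z, μ x (μ y z) + μ y (μ z x) + μ z (μ x y) = 0

/-- `μ` is a nilpotent Lie bracket on `ℝⁿ`. -/
def IsNilBracket {n : ℕ} (μ : (Fin n → ℝ) → (Fin n → ℝ) → (Fin n → ℝ)) : Prop :=
  IsSkewBil μ ∧ IsJacobi μ ∧ ∀ x, IsNilpotent (adMat μ x)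

/-!
Write `adᵢ` for the matrix of `y ↦ μ(eᵢ, y)`. Then `μ(eᵢ, α eⱼ)`, `μ(eᵢ, eⱼ)` and `α μ(eᵢ, eⱼ)` are
the `j`-th columns of `adᵢ α`, `adᵢ` and `α adᵢ`, so summing over `j` turns the pairings in
`⟨δ_μ(α), μ⟩` into Frobenius products: `tr(adᵢᵀ adᵢ α)` for the second and `tr(adᵢ adᵢᵀ α)` for the
third term. Skew-symmetry of `μ` makes the first term equal to the second, hence
`⟨δ_μ(α), μ⟩ = 2 Σᵢ tr(adᵢᵀ adᵢ α) - Σᵢ tr(adᵢ adᵢᵀ α) = -4 tr(Ric_μ α)`.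
-/

namespace Matrix

variable {R n : Type*} [CommSemiring R] [Fintype n] [DecidableEq n]

theorem sum_mulVec_single_dotProduct (M N : Matrix n n R) :
    ∑ j, (M *ᵥ Pi.single j 1) ⬝ᵥ (N *ᵥ Pi.single j 1) = (Mᵀ * N).trace := by
  simp only [mulVec_single_one]
  rfl

theorem sum_mulVec_mulVec_single_dotProduct_inner (M A : Matrix n n R) :
    ∑ j, (M *ᵥ (A *ᵥ Pi.single j 1)) ⬝ᵥ (M *ᵥ Pi.single j 1) = (Mᵀ * M * A).trace := by
  simp only [mulVec_mulVec, sum_mulVec_single_dotProduct]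
  rw [← trace_transpose]
  simp only [transpose_mul, transpose_transpose, Matrix.mul_assoc]

theorem sum_mulVec_mulVec_single_dotProduct_outer (M A : Matrix n n R) :
    ∑ j, (A *ᵥ (M *ᵥ Pi.single j 1)) ⬝ᵥ (M *ᵥ Pi.single j 1) = (M * Mᵀ * A).trace := by
  simp only [mulVec_mulVec, sum_mulVec_single_dotProduct]
  rw [← trace_transpose]
  simp only [transpose_mul, transpose_transpose]
  rw [← Matrix.mul_assoc, trace_mul_cycle]

end Matrix

theorem adMat_mulVec {n : ℕ} {μ : (Fin n → ℝ) → (Fin n → ℝ) → (Fin n → ℝ)} {x : Fin n → ℝ}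
    (hx : IsLinearMap ℝ (μ x)) (v : Fin n → ℝ) : adMat μ x *ᵥ v = μ x v :=
  LinearMap.toMatrix'_mulVec (hx.mk' _) v

theorem trace_Ric_mul {n : ℕ} (μ : (Fin n → ℝ) → (Fin n → ℝ) → (Fin n → ℝ))
    (A : Matrix (Fin n) (Fin n) ℝ) :
    (Ric μ * A).trace =
      -(1/2) * ∑ i, ((adMat μ (Pi.single i 1))ᵀ * adMat μ (Pi.single i 1) * A).trace
      + 1/4 * ∑ i, (adMat μ (Pi.single i 1) * (adMat μ (Pi.single i 1))ᵀ * A).trace := by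
  simp only [Ric, Matrix.add_mul, Matrix.smul_mul, Matrix.sum_mul, trace_add, trace_smul,
    trace_sum, smul_eq_mul]

theorem innV_deltaMap {n : ℕ} {μ : (Fin n → ℝ) → (Fin n → ℝ) → (Fin n → ℝ)} (hμ : IsSkewBil μ)
    (A : Matrix (Fin n) (Fin n) ℝ) :
    innV (deltaMap μ A) μ =
      2 * ∑ i, ((adMat μ (Pi.single i 1))ᵀ * adMat μ (Pi.single i 1) * A).trace
      - ∑ i, (adMat μ (Pi.single i 1) * (adMat μ (Pi.single i 1))ᵀ * A).trace := by
  obtain ⟨hlin, -, hskew⟩ := hμ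
  have hfirst_eq_second :
      ∑ i, ∑ j, μ (A *ᵥ Pi.single i 1) (Pi.single j 1) ⬝ᵥ μ (Pi.single i 1) (Pi.single j 1)
        = ∑ i, ∑ j, μ (Pi.single i 1) (A *ᵥ Pi.single j 1) ⬝ᵥ μ (Pi.single i 1) (Pi.single j 1) := by
    rw [Finset.sum_comm]
    refine Finset.sum_congr rfl fun i _ => Finset.sum_congr rfl fun j _ => ?_
    rw [hskew (A *ᵥ _), hskew (Pi.single j 1), neg_dotProduct_neg]
  have hsecond (i : Fin n) :
      ∑ j, μ (Pi.single i 1) (A *ᵥ Pi.single j 1) ⬝ᵥ μ (Pi.single i 1) (Pi.single j 1)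
        = ((adMat μ (Pi.single i 1))ᵀ * adMat μ (Pi.single i 1) * A).trace := by
    rw [← sum_mulVec_mulVec_single_dotProduct_inner]
    simp only [adMat_mulVec (hlin (Pi.single i 1))]
  have hthird (i : Fin n) :
      ∑ j, A *ᵥ μ (Pi.single i 1) (Pi.single j 1) ⬝ᵥ μ (Pi.single i 1) (Pi.single j 1)
        = (adMat μ (Pi.single i 1) * (adMat μ (Pi.single i 1))ᵀ * A).trace := by
    rw [← sum_mulVec_mulVec_single_dotProduct_outer]
    simp only [adMat_mulVec (hlin (Pi.single i 1))]
  change ∑ i, ∑ j, deltaMap μ A _ _ ⬝ᵥ _ = _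
  simp only [deltaMap, add_dotProduct, sub_dotProduct, Finset.sum_add_distrib,
    Finset.sum_sub_distrib, hfirst_eq_second, hsecond, hthird]
  ring

/-- `tr(Ric_μ α) = -¼ ⟨δ_μ(α), μ⟩` for all `α`. -/
theorem stmt4 {n : ℕ} (μ : (Fin n → ℝ) → (Fin n → ℝ) → (Fin n → ℝ))
    (hμ : IsSkewBil μ) (A : Matrix (Fin n) (Fin n) ℝ) :
    (Ric μ * A).trace = -(1/4 : ℝ) * innV (deltaMap μ A) μ := by
  rw [trace_Ric_mul, innV_deltaMap hμ]
  ring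
end
end

section
/- For any μ ∈ V_n and any derivation D of (ℝⁿ, μ), one has tr(Ric_μ D) = 0. -/
/-! The Ricci operator is, up to the factor `-1/4`, the moment map of the `GL(n)`-action on
`V_n`: `tr(Ric_μ A) = -¼ ⟨δ_μ(A), μ⟩` for every matrix `A`, and `δ_μ(D) = 0` when `D` is a
derivation. To prove the moment map identity, write `⟨ν, μ⟩` as the Frobenius pairing
`Σᵢ tr((ad_ν eᵢ)ᵀ ad_μ eᵢ)` and use `ad_{δ_μ(A)} x = ad_μ(Ax) + (ad_μ x) A - A (ad_μ x)`;
skew-symmetry of `μ` turns the Gram matrix `tr((ad_μ e_p)ᵀ ad_μ e_q)` into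
`Σⱼ (ad_μ eⱼ)ᵀ (ad_μ eⱼ)`. -/

open Matrix BigOperators

noncomputable section

theorem Matrix.trace_transpose_mul_mul_self {m R : Type*} [Fintype m] [CommRing R]
    (X A : Matrix m m R) : ((X * A)ᵀ * X).trace = (Xᵀ * X * A).trace := by
  rw [← Matrix.trace_transpose, Matrix.transpose_mul, Matrix.transpose_transpose,
    Matrix.mul_assoc]

theorem Matrix.trace_transpose_mul_self_mul {m R : Type*} [Fintype m] [CommRing R]
    (A X : Matrix m m R) : ((A * X)ᵀ * X).trace = (X * Xᵀ * A).trace := by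
  rw [← Matrix.trace_transpose, Matrix.transpose_mul, Matrix.transpose_transpose,
    ← Matrix.mul_assoc, Matrix.trace_mul_cycle]

theorem IsLinearMap.eq_sum_smul_single {ι R M : Type*} [Fintype ι] [DecidableEq ι]
    [CommSemiring R] [AddCommMonoid M] [Module R M] {f : (ι → R) → M}
    (hf : IsLinearMap R f) (v : ι → R) : f v = ∑ i, v i • f (Pi.single i 1) := by
  calc f v = IsLinearMap.mk' f hf (∑ i, v i • Pi.single i 1) := by
        rw [← pi_eq_sum_univ' v]; rfl
    _ = ∑ i, v i • f (Pi.single i 1) := by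
        simp only [map_sum, LinearMap.map_smul, IsLinearMap.mk'_apply]

section

variable {n : ℕ} {μ : (Fin n → ℝ) → (Fin n → ℝ) → (Fin n → ℝ)}

theorem adMat_eq_sum_smul (h : ∀ y, IsLinearMap ℝ (fun x => μ x y)) (x : Fin n → ℝ) :
    adMat μ x = ∑ q, x q • adMat μ (Pi.single q 1) := by
  ext k j
  simp only [adMat, Matrix.sum_apply, Matrix.smul_apply]
  rw [(h (Pi.single j 1)).eq_sum_smul_single x]
  simp

theorem adMat_deltaMap (h : ∀ x, IsLinearMap ℝ (μ x)) (A : Matrix (Fin n) (Fin n) ℝ)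
    (x : Fin n → ℝ) :
    adMat (deltaMap μ A) x = adMat μ (A *ᵥ x) + adMat μ x * A - A * adMat μ x := by
  ext k j
  simp only [adMat, deltaMap, Matrix.add_apply, Matrix.sub_apply, Matrix.mul_apply,
    Pi.add_apply, Pi.sub_apply]
  rw [(h x).eq_sum_smul_single (A *ᵥ Pi.single j 1), Matrix.mulVec_single_one]
  simp [Matrix.mulVec, dotProduct, mul_comm]

theorem innV_eq_sum_trace (ν μ : (Fin n → ℝ) → (Fin n → ℝ) → (Fin n → ℝ)) :
    innV ν μ = ∑ i, ((adMat ν (Pi.single i 1))ᵀ * adMat μ (Pi.single i 1)).trace := by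
  simp [innV, Matrix.trace, Matrix.mul_apply, adMat]

theorem trace_transpose_adMat_mul_adMat (h : ∀ x y, μ x y = -μ y x) (p q : Fin n) :
    ((adMat μ (Pi.single p 1))ᵀ * adMat μ (Pi.single q 1)).trace
      = (∑ j, (adMat μ (Pi.single j 1))ᵀ * adMat μ (Pi.single j 1)) q p := by
  simp only [Matrix.trace, Matrix.diag, Matrix.mul_apply, Matrix.sum_apply,
    Matrix.transpose_apply, adMat]
  refine Finset.sum_congr rfl fun j _ => Finset.sum_congr rfl fun k _ => ?_
  rw [h (Pi.single p 1), h (Pi.single q 1)]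
  simp only [Pi.neg_apply]
  ring

theorem sum_trace_transpose_adMat_mulVec_mul_adMat (hμ : IsSkewBil μ)
    (A : Matrix (Fin n) (Fin n) ℝ) :
    ∑ i, ((adMat μ (A *ᵥ Pi.single i 1))ᵀ * adMat μ (Pi.single i 1)).trace
      = ((∑ j, (adMat μ (Pi.single j 1))ᵀ * adMat μ (Pi.single j 1)) * A).trace := by
  have hi : ∀ i, ((adMat μ (A *ᵥ Pi.single i 1))ᵀ * adMat μ (Pi.single i 1)).trace
      = ∑ q, (∑ j, (adMat μ (Pi.single j 1))ᵀ * adMat μ (Pi.single j 1)) i q * A q i := by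
    intro i
    rw [adMat_eq_sum_smul hμ.2.1, Matrix.transpose_sum, Matrix.sum_mul, Matrix.trace_sum]
    simp only [Matrix.transpose_smul, Matrix.smul_mul, Matrix.trace_smul, smul_eq_mul,
      Matrix.mulVec_single_one, Matrix.col_apply, trace_transpose_adMat_mul_adMat hμ.2.2, mul_comm]
  simp only [hi]
  rfl

theorem trace_Ric_mul_eq_innV_deltaMap (hμ : IsSkewBil μ) (A : Matrix (Fin n) (Fin n) ℝ) :
    (Ric μ * A).trace = -(1/4) * innV (deltaMap μ A) μ := by
  set S := ∑ j, (adMat μ (Pi.single j 1))ᵀ * adMat μ (Pi.single j 1)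
  set S' := ∑ j, adMat μ (Pi.single j 1) * (adMat μ (Pi.single j 1))ᵀ
  have hRic : (Ric μ * A).trace = -(1/2) * (S * A).trace + 1/4 * (S' * A).trace := by
    simp only [Ric, Matrix.add_mul, Matrix.smul_mul, Matrix.trace_add, Matrix.trace_smul,
      smul_eq_mul, S, S']
  have hδ : innV (deltaMap μ A) μ = 2 * (S * A).trace - (S' * A).trace := by
    simp only [innV_eq_sum_trace, adMat_deltaMap hμ.1, Matrix.transpose_add,
      Matrix.transpose_sub, Matrix.add_mul, Matrix.sub_mul, Matrix.trace_add, Matrix.trace_sub,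
      Finset.sum_add_distrib, Finset.sum_sub_distrib,
      sum_trace_transpose_adMat_mulVec_mul_adMat hμ]
    simp only [Matrix.trace_transpose_mul_mul_self, Matrix.trace_transpose_mul_self_mul,
      ← Matrix.trace_sum, ← Finset.sum_mul, S, S']
    ring
  rw [hRic, hδ]
  ring

theorem IsDeriv.deltaMap_eq_zero {D : Matrix (Fin n) (Fin n) ℝ} (hD : IsDeriv μ D) :
    deltaMap μ D = 0 := by
  ext x y
  simp [deltaMap, hD x y]

end

/-- `tr(Ric_μ D) = 0` for every derivation `D` of `(ℝⁿ,μ)`. -/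
theorem stmt5 {n : ℕ} (μ : (Fin n → ℝ) → (Fin n → ℝ) → (Fin n → ℝ))
    (hμ : IsSkewBil μ) (D : Matrix (Fin n) (Fin n) ℝ) (hD : IsDeriv μ D) :
    (Ric μ * D).trace = 0 := by
  rw [trace_Ric_mul_eq_innV_deltaMap hμ, hD.deltaMap_eq_zero]
  simp [innV]
end
end

section
/- Along any solution μ(t) of the bracket flow μ' = δ_μ(Ric_μ), one has d/dt ‖μ(t)‖² = -8 tr(Ric_{μ(t)}²); in particular ‖μ(t)‖ is nonincreasing. -/
/-!
Differentiating the inner product gives `d/dt ‖μ‖² = 2 ⟨δ_μ(Ric_μ), μ⟩`. For any skew-symmetric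
bilinear `μ` and any matrix `A`, expanding in structure constants shows
`⟨δ_μ(A), μ⟩ = -4 tr (A Ric_μ)`. Hence the derivative is `-8 tr Ric_μ²`, which is `≤ 0`
because `Ric_μ` is symmetric.
-/

open Matrix BigOperators

noncomputable section

namespace BracketFlow

variable {n : ℕ}

def structConst (μ : (Fin n → ℝ) → (Fin n → ℝ) → (Fin n → ℝ)) (i j k : Fin n) : ℝ :=
  μ (Pi.single i 1) (Pi.single j 1) k

lemma structConst_swap {μ : (Fin n → ℝ) → (Fin n → ℝ) → (Fin n → ℝ)} (hμ : IsSkewBil μ)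
    (i j k : Fin n) : structConst μ j i k = -structConst μ i j k := by
  simp [structConst, hμ.2.2 (Pi.single j 1)]

lemma apply_eq_sum_single {f : (Fin n → ℝ) → (Fin n → ℝ)} (hf : IsLinearMap ℝ f)
    (v : Fin n → ℝ) (k : Fin n) : f v k = ∑ l, v l * f (Pi.single l 1) k := by
  have := congrFun (LinearMap.toMatrix'_mulVec (IsLinearMap.mk' f hf) v) k
  simp only [IsLinearMap.mk'_apply] at this
  simp [← this, Matrix.mulVec, dotProduct, LinearMap.toMatrix'_apply, mul_comm]

lemma structConst_deltaMap {μ : (Fin n → ℝ) → (Fin n → ℝ) → (Fin n → ℝ)} (hμ : IsSkewBil μ)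
    (A : Matrix (Fin n) (Fin n) ℝ) (i j k : Fin n) :
    structConst (deltaMap μ A) i j k =
      ∑ l, A l i * structConst μ l j k + ∑ l, A l j * structConst μ i l k
        - ∑ l, A k l * structConst μ i j l := by
  simp only [structConst, deltaMap, Pi.add_apply, Pi.sub_apply]
  rw [apply_eq_sum_single (hμ.2.1 _), apply_eq_sum_single (hμ.1 _)]
  simp [Matrix.mulVec, dotProduct, Pi.single_apply]

lemma innV_eq_sum_structConst (μ ν : (Fin n → ℝ) → (Fin n → ℝ) → (Fin n → ℝ)) :
    innV μ ν = ∑ i, ∑ j, ∑ k, structConst μ i j k * structConst ν i j k := rfl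

lemma innV_comm (μ ν : (Fin n → ℝ) → (Fin n → ℝ) → (Fin n → ℝ)) : innV μ ν = innV ν μ := by
  simp only [innV, mul_comm]

theorem hasDerivAt_innV {μ ν : ℝ → (Fin n → ℝ) → (Fin n → ℝ) → (Fin n → ℝ)}
    {μ' ν' : (Fin n → ℝ) → (Fin n → ℝ) → (Fin n → ℝ)} {t : ℝ}
    (hμ : ∀ x y, HasDerivAt (fun s => μ s x y) (μ' x y) t)
    (hν : ∀ x y, HasDerivAt (fun s => ν s x y) (ν' x y) t) :
    HasDerivAt (fun s => innV (μ s) (ν s)) (innV μ' (ν t) + innV (μ t) ν') t := by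
  simp only [innV, ← Finset.sum_add_distrib]
  exact HasDerivAt.fun_sum fun i _ => HasDerivAt.fun_sum fun j _ =>
    HasDerivAt.fun_sum fun k _ =>
      (hasDerivAt_pi.mp (hμ (Pi.single i 1) (Pi.single j 1)) k).mul
        (hasDerivAt_pi.mp (hν (Pi.single i 1) (Pi.single j 1)) k)

lemma Ric_apply (μ : (Fin n → ℝ) → (Fin n → ℝ) → (Fin n → ℝ)) (m l : Fin n) :
    Ric μ m l =
      -(1/2) * ∑ j, ∑ k, structConst μ j m k * structConst μ j l k
        + 1/4 * ∑ j, ∑ k, structConst μ j k m * structConst μ j k l := by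
  simp [Ric, Matrix.sum_apply, Matrix.mul_apply, adMat, structConst]

theorem innV_deltaMap_self {μ : (Fin n → ℝ) → (Fin n → ℝ) → (Fin n → ℝ)} (hμ : IsSkewBil μ)
    (A : Matrix (Fin n) (Fin n) ℝ) :
    innV (deltaMap μ A) μ = -4 * (A * Ric μ).trace := by
  have innV_eq : innV (deltaMap μ A) μ =
      ∑ i, ∑ j, ∑ k, (∑ l, A l i * structConst μ l j k) * structConst μ i j k
        + ∑ i, ∑ j, ∑ k, (∑ l, A l j * structConst μ i l k) * structConst μ i j k
        - ∑ i, ∑ j, ∑ k, (∑ l, A k l * structConst μ i j l) * structConst μ i j k := by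
    simp only [innV_eq_sum_structConst, structConst_deltaMap hμ, add_mul, sub_mul,
      Finset.sum_add_distrib, Finset.sum_sub_distrib]
  set c := structConst μ
  have hswap : ∀ i j k, c j i k = -c i j k := structConst_swap hμ
  -- Writing `Ric μ = -½ P + ¼ Q` as in its definition, `first` computes `tr (A P)`, `second`
  -- reduces to it by skew-symmetry, and `third` computes `tr (A Q)`.
  have first : ∑ i, ∑ j, ∑ k, (∑ l, A l i * c l j k) * c i j k =
      ∑ l, ∑ m, A l m * ∑ j, ∑ k, c j m k * c j l k := by
    simp only [Finset.sum_mul, Finset.mul_sum]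
    conv_lhs => enter [2, b]; rw [Finset.sum_comm_cycle]
    rw [Finset.sum_comm]
    refine Finset.sum_congr rfl fun a _ => Finset.sum_congr rfl fun b _ =>
      Finset.sum_congr rfl fun p _ => Finset.sum_congr rfl fun q _ => ?_
    rw [hswap a p q, hswap b p q]
    ring
  have second : ∑ i, ∑ j, ∑ k, (∑ l, A l j * c i l k) * c i j k =
      ∑ i, ∑ j, ∑ k, (∑ l, A l i * c l j k) * c i j k := by
    simp only [Finset.sum_mul]
    rw [Finset.sum_comm]
    refine Finset.sum_congr rfl fun i _ => Finset.sum_congr rfl fun j _ =>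
      Finset.sum_congr rfl fun k _ => Finset.sum_congr rfl fun l _ => ?_
    rw [hswap l j k, hswap i j k]
    ring
  have third : ∑ i, ∑ j, ∑ k, (∑ l, A k l * c i j l) * c i j k =
      ∑ l, ∑ m, A l m * ∑ j, ∑ k, c j k m * c j k l := by
    simp only [Finset.sum_mul, Finset.mul_sum]
    conv_lhs => enter [2, p]; rw [Finset.sum_comm_cycle, Finset.sum_comm_cycle]
    rw [Finset.sum_comm]
    conv_lhs => enter [2, a]; rw [Finset.sum_comm]
    refine Finset.sum_congr rfl fun a _ => Finset.sum_congr rfl fun b _ =>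
      Finset.sum_congr rfl fun p _ => Finset.sum_congr rfl fun q _ => ?_
    ring
  have trace_eq : (A * Ric μ).trace =
      -(1/2) * ∑ l, ∑ m, A l m * ∑ j, ∑ k, c j m k * c j l k
        + 1/4 * ∑ l, ∑ m, A l m * ∑ j, ∑ k, c j k m * c j k l := by
    simp only [Matrix.trace, Matrix.diag, Matrix.mul_apply, Ric_apply, mul_add, Finset.mul_sum,
      Finset.sum_add_distrib]
    congr 1 <;>
    · refine Finset.sum_congr rfl fun l _ => Finset.sum_congr rfl fun m _ =>
        Finset.sum_congr rfl fun j _ => Finset.sum_congr rfl fun k _ => ?_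
      ring
  rw [innV_eq, trace_eq, second, first, third]
  ring

lemma Ric_isSymm (μ : (Fin n → ℝ) → (Fin n → ℝ) → (Fin n → ℝ)) : (Ric μ).IsSymm := by
  simp [Matrix.IsSymm, Ric, Matrix.transpose_sum, Matrix.transpose_mul]

lemma trace_Ric_mul_self_nonneg (μ : (Fin n → ℝ) → (Fin n → ℝ) → (Fin n → ℝ)) :
    0 ≤ (Ric μ * Ric μ).trace := by
  have hRic : (Ric μ)ᴴ = Ric μ := by
    rw [Matrix.conjTranspose_eq_transpose_of_trivial, (Ric_isSymm μ).eq]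
  simpa only [hRic] using (Matrix.posSemidef_conjTranspose_mul_self (Ric μ)).trace_nonneg

end BracketFlow

/-- `d/dt ‖μ(t)‖² = -8 tr(Ric_{μ(t)}²)`; in particular `‖μ(t)‖`
is nonincreasing. -/
theorem stmt14 {n : ℕ} (μ : ℝ → (Fin n → ℝ) → (Fin n → ℝ) → (Fin n → ℝ))
    (hsb : ∀ t, IsSkewBil (μ t))
    (hflow : ∀ t, ∀ x y : Fin n → ℝ,
      HasDerivAt (fun s => μ s x y) (deltaMap (μ t) (Ric (μ t)) x y) t) :
    (∀ t, HasDerivAt (fun s => innV (μ s) (μ s))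
      (-8 * (Ric (μ t) * Ric (μ t)).trace) t) ∧
    Antitone (fun t => Real.sqrt (innV (μ t) (μ t))) := by
  have hderiv : ∀ t, HasDerivAt (fun s => innV (μ s) (μ s))
      (-8 * (Ric (μ t) * Ric (μ t)).trace) t := by
    intro t
    convert BracketFlow.hasDerivAt_innV (hflow t) (hflow t) using 1
    rw [BracketFlow.innV_comm (μ t), BracketFlow.innV_deltaMap_self (hsb t)]
    ring
  refine ⟨hderiv, Real.sqrt_monotone.comp_antitone ?_⟩
  exact antitone_of_hasDerivAt_nonpos hderiv fun t =>
    mul_nonpos_of_nonpos_of_nonneg (by norm_num) (BracketFlow.trace_Ric_mul_self_nonneg (μ t))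
end
end

section
/- Suppose λ ∈ V_n, c ∈ ℝ, and Ric_λ + cI is a derivation of (ℝⁿ, λ) with λ ≠ 0. Then c = 4 tr(Ric_λ²)/‖λ‖² > 0; in particular, c is positive. -/
open Matrix BigOperators

noncomputable section

namespace S19
variable {n : ℕ}

/-- structure constants -/
def cs (l : (Fin n → ℝ) → (Fin n → ℝ) → (Fin n → ℝ)) (i j k : Fin n) : ℝ :=
  l (Pi.single i 1) (Pi.single j 1) k

lemma basis_expand (v : Fin n → ℝ) : ∑ a, v a • (Pi.single a 1 : Fin n → ℝ) = v := by
  ext m; simp [Pi.single_apply]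

lemma lin1 (l : (Fin n → ℝ) → (Fin n → ℝ) → (Fin n → ℝ)) (hl : IsSkewBil l)
    (v y : Fin n → ℝ) : l v y = ∑ a, v a • l (Pi.single a 1) y := by
  have hv : ∑ a, v a • (Pi.single a 1 : Fin n → ℝ) = v := basis_expand v
  let L := IsLinearMap.mk' _ (hl.2.1 y)
  have hL : ∀ u, l u y = L u := fun u => rfl
  rw [hL v, ← hv, map_sum]; simp only [LinearMap.map_smul]; rw [hv]; rfl

lemma lin2 (l : (Fin n → ℝ) → (Fin n → ℝ) → (Fin n → ℝ)) (hl : IsSkewBil l)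
    (x v : Fin n → ℝ) : l x v = ∑ a, v a • l x (Pi.single a 1) := by
  have hv : ∑ a, v a • (Pi.single a 1 : Fin n → ℝ) = v := basis_expand v
  let L := IsLinearMap.mk' _ (hl.1 x)
  have hL : ∀ u, l x u = L u := fun u => rfl
  rw [hL v, ← hv, map_sum]; simp only [LinearMap.map_smul]; rw [hv]; rfl

lemma skew (l : (Fin n → ℝ) → (Fin n → ℝ) → (Fin n → ℝ)) (hl : IsSkewBil l)
    (i j k : Fin n) : cs l i j k = - cs l j i k := by
  have := hl.2.2 (Pi.single i 1) (Pi.single j 1)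
  have := congrFun this k
  simpa [cs] using this

/-- full expansion of l in structure constants -/
lemma expand (l : (Fin n → ℝ) → (Fin n → ℝ) → (Fin n → ℝ)) (hl : IsSkewBil l)
    (x y : Fin n → ℝ) (k : Fin n) :
    l x y k = ∑ i, ∑ j, x i * y j * cs l i j k := by
  rw [lin1 l hl x y]
  rw [Finset.sum_apply]
  refine Finset.sum_congr rfl fun i _ => ?_
  rw [Pi.smul_apply, smul_eq_mul, lin2 l hl _ y, Finset.sum_apply, Finset.mul_sum]
  refine Finset.sum_congr rfl fun j _ => ?_
  rw [Pi.smul_apply, smul_eq_mul, cs]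
  ring

/-- transpositions for quadruple sums -/
lemma t12 (f : Fin n → Fin n → Fin n → Fin n → ℝ) :
    ∑ a, ∑ b, ∑ c, ∑ d, f a b c d = ∑ b, ∑ a, ∑ c, ∑ d, f a b c d := Finset.sum_comm
lemma t23 (f : Fin n → Fin n → Fin n → Fin n → ℝ) :
    ∑ a, ∑ b, ∑ c, ∑ d, f a b c d = ∑ a, ∑ c, ∑ b, ∑ d, f a b c d :=
  Finset.sum_congr rfl fun _ _ => Finset.sum_comm
lemma t34 (f : Fin n → Fin n → Fin n → Fin n → ℝ) :
    ∑ a, ∑ b, ∑ c, ∑ d, f a b c d = ∑ a, ∑ b, ∑ d, ∑ c, f a b c d :=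
  Finset.sum_congr rfl fun _ _ => Finset.sum_congr rfl fun _ _ => Finset.sum_comm

lemma perm3412 (f : Fin n → Fin n → Fin n → Fin n → ℝ) :
    ∑ a, ∑ b, ∑ c, ∑ d, f a b c d = ∑ c, ∑ d, ∑ a, ∑ b, f a b c d :=
  (t23 f).trans <| (t12 fun a c b d => f a b c d).trans <|
    (t34 fun c a b d => f a b c d).trans <| t23 fun c a d b => f a b c d

lemma perm1423 (f : Fin n → Fin n → Fin n → Fin n → ℝ) :
    ∑ a, ∑ b, ∑ c, ∑ d, f a b c d = ∑ a, ∑ d, ∑ b, ∑ c, f a b c d :=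
  (t34 f).trans <| t23 fun a b d c => f a b c d

lemma perm2413 (f : Fin n → Fin n → Fin n → Fin n → ℝ) :
    ∑ a, ∑ b, ∑ c, ∑ d, f a b c d = ∑ b, ∑ d, ∑ a, ∑ c, f a b c d :=
  (t12 f).trans <| (t34 fun b a c d => f a b c d).trans <| t23 fun b a d c => f a b c d

lemma u12 (f : Fin n → Fin n → Fin n → ℝ) :
    ∑ a, ∑ b, ∑ c, f a b c = ∑ b, ∑ a, ∑ c, f a b c := Finset.sum_comm
lemma u23 (f : Fin n → Fin n → Fin n → ℝ) :
    ∑ a, ∑ b, ∑ c, f a b c = ∑ a, ∑ c, ∑ b, f a b c :=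
  Finset.sum_congr rfl fun _ _ => Finset.sum_comm
lemma uperm231 (f : Fin n → Fin n → Fin n → ℝ) :
    ∑ a, ∑ b, ∑ c, f a b c = ∑ b, ∑ c, ∑ a, f a b c :=
  (u12 f).trans <| u23 fun b a c => f a b c

/-- Ric entries -/
lemma ric_apply (l : (Fin n → ℝ) → (Fin n → ℝ) → (Fin n → ℝ)) (p q : Fin n) :
    Ric l p q = -(1/2) * (∑ i, ∑ m, cs l i p m * cs l i q m)
      + (1/4) * (∑ i, ∑ m, cs l i m p * cs l i m q) := by
  simp [Ric, Matrix.add_apply, Matrix.smul_apply, Matrix.sum_apply, Matrix.mul_apply,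
    Matrix.transpose_apply, adMat, cs, smul_eq_mul, Finset.mul_sum]

lemma ric_symm (l : (Fin n → ℝ) → (Fin n → ℝ) → (Fin n → ℝ)) (p q : Fin n) :
    Ric l p q = Ric l q p := by
  rw [ric_apply, ric_apply]
  congr 1
  · congr 1
    exact Finset.sum_congr rfl fun i _ => Finset.sum_congr rfl fun m _ => mul_comm _ _
  · congr 1
    exact Finset.sum_congr rfl fun i _ => Finset.sum_congr rfl fun m _ => mul_comm _ _

/-- trace of Ric -/
lemma trace_ric (l : (Fin n → ℝ) → (Fin n → ℝ) → (Fin n → ℝ)) :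
    (Ric l).trace = -(1/4) * innV l l := by
  have h1 : ∑ p, ∑ i, ∑ m, cs l i p m * cs l i p m
      = ∑ i, ∑ p, ∑ m, cs l i p m * cs l i p m := u12 _
  have h2 : ∑ p, ∑ i, ∑ m, cs l i m p * cs l i m p
      = ∑ i, ∑ m, ∑ p, cs l i m p * cs l i m p := uperm231 _
  simp only [Matrix.trace, Matrix.diag, ric_apply]
  rw [Finset.sum_add_distrib, ← Finset.mul_sum, ← Finset.mul_sum, h1, h2]
  have : innV l l = ∑ i, ∑ j, ∑ k, cs l i j k * cs l i j k := rfl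
  rw [this]
  ring

/-- key: derivation component identity -/
lemma deriv_comp (l : (Fin n → ℝ) → (Fin n → ℝ) → (Fin n → ℝ)) (hl : IsSkewBil l)
    (D : Matrix (Fin n) (Fin n) ℝ) (hD : IsDeriv l D) (i j k : Fin n) :
    ∑ r, D k r * cs l i j r
      = (∑ m, D m i * cs l m j k) + ∑ m, D m j * cs l i m k := by
  have h := congrFun (hD (Pi.single i 1) (Pi.single j 1)) k
  have e1 : D.mulVec (l (Pi.single i 1) (Pi.single j 1)) k = ∑ r, D k r * cs l i j r := by
    simp [Matrix.mulVec, dotProduct, cs]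
  have hs : ∀ a : Fin n, D.mulVec (Pi.single a 1) = fun m => D m a := by
    intro a; ext m; simp [Matrix.mulVec_single]
  have e2 : l (D.mulVec (Pi.single i 1)) (Pi.single j 1) k = ∑ m, D m i * cs l m j k := by
    rw [hs i, lin1 l hl, Finset.sum_apply]
    refine Finset.sum_congr rfl fun m _ => ?_
    simp [cs]
  have e3 : l (Pi.single i 1) (D.mulVec (Pi.single j 1)) k = ∑ m, D m j * cs l i m k := by
    rw [hs j, lin2 l hl, Finset.sum_apply]
    refine Finset.sum_congr rfl fun m _ => ?_
    simp [cs]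
  rw [Pi.add_apply, e2, e3] at h
  rw [← h, ← e1]

/-- tr(Ric·D) = 0 for any derivation D -/
lemma trace_ric_deriv (l : (Fin n → ℝ) → (Fin n → ℝ) → (Fin n → ℝ)) (hl : IsSkewBil l)
    (D : Matrix (Fin n) (Fin n) ℝ) (hD : IsDeriv l D) :
    (Ric l * D).trace = 0 := by
  set C := cs l with hC
  have hskew : ∀ i j k, C i j k = - C j i k := fun i j k => skew l hl i j k
  set E1 : ℝ := ∑ p, ∑ q, ∑ i, ∑ m, C i p m * C i q m * D q p with hE1
  set E2 : ℝ := ∑ p, ∑ q, ∑ i, ∑ m, C i m p * C i m q * D q p with hE2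
  have hderiv : ∀ i j k, ∑ r, D k r * C i j r
      = (∑ m, D m i * C m j k) + ∑ m, D m j * C i m k :=
    fun i j k => deriv_comp l hl D hD i j k
  have key : E2 = E1 + E1 := by
    have h : ∑ a, ∑ b, ∑ q, (∑ p, D q p * C a b p) * C a b q
        = ∑ a, ∑ b, ∑ q, ((∑ m, D m a * C m b q) + ∑ m, D m b * C a m q) * C a b q := by
      refine Finset.sum_congr rfl fun a _ => Finset.sum_congr rfl fun b _ =>
        Finset.sum_congr rfl fun q _ => ?_
      rw [hderiv a b q]
    have hLHS : ∑ a, ∑ b, ∑ q, (∑ p, D q p * C a b p) * C a b q = E2 := by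
      rw [hE2]
      have s1 : ∑ a, ∑ b, ∑ q, (∑ p, D q p * C a b p) * C a b q
          = ∑ a, ∑ b, ∑ q, ∑ p, C a b p * C a b q * D q p := by
        refine Finset.sum_congr rfl fun a _ => Finset.sum_congr rfl fun b _ =>
          Finset.sum_congr rfl fun q _ => ?_
        rw [Finset.sum_mul]
        exact Finset.sum_congr rfl fun p _ => by ring
      rw [s1]
      exact (t34 fun a b q p => C a b p * C a b q * D q p).trans
        (perm3412 fun a b p q => C a b p * C a b q * D q p)
    have hB1 : ∑ a, ∑ b, ∑ q, ∑ m, D m a * C m b q * C a b q = E1 := by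
      have step : ∑ a, ∑ b, ∑ q, ∑ m, D m a * C m b q * C a b q
          = ∑ a, ∑ b, ∑ q, ∑ m, C b a q * C b m q * D m a := by
        refine Finset.sum_congr rfl fun a _ => Finset.sum_congr rfl fun b _ =>
          Finset.sum_congr rfl fun q _ => Finset.sum_congr rfl fun m _ => ?_
        rw [hskew m b q, hskew a b q]; ring
      rw [step, hE1]
      exact perm1423 fun a b q m => C b a q * C b m q * D m a
    have hB2 : ∑ a, ∑ b, ∑ q, ∑ m, D m b * C a m q * C a b q = E1 := by
      have step : ∑ a, ∑ b, ∑ q, ∑ m, D m b * C a m q * C a b q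
          = ∑ a, ∑ b, ∑ q, ∑ m, C a b q * C a m q * D m b := by
        refine Finset.sum_congr rfl fun a _ => Finset.sum_congr rfl fun b _ =>
          Finset.sum_congr rfl fun q _ => Finset.sum_congr rfl fun m _ => by ring
      rw [step, hE1]
      exact perm2413 fun a b q m => C a b q * C a m q * D m b
    have hsplit : ∑ a, ∑ b, ∑ q, ((∑ m, D m a * C m b q) + ∑ m, D m b * C a m q) * C a b q
        = (∑ a, ∑ b, ∑ q, ∑ m, D m a * C m b q * C a b q)
          + ∑ a, ∑ b, ∑ q, ∑ m, D m b * C a m q * C a b q := by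
      simp only [add_mul, Finset.sum_mul, Finset.sum_add_distrib]
    rw [← hLHS, h, hsplit, hB1, hB2]
  have htr : (Ric l * D).trace = -(1/2) * E1 + (1/4) * E2 := by
    have tr1 : (Ric l * D).trace = ∑ p, ∑ q, Ric l p q * D q p := by
      simp [Matrix.trace, Matrix.diag, Matrix.mul_apply]
    have per : ∀ p q : Fin n, Ric l p q * D q p
        = -(1/2) * (∑ i, ∑ m, C i p m * C i q m * D q p)
          + (1/4) * (∑ i, ∑ m, C i m p * C i m q * D q p) := by
      intro p q
      have hA : (∑ i, ∑ m, C i p m * C i q m) * D q p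
          = ∑ i, ∑ m, C i p m * C i q m * D q p := by
        rw [Finset.sum_mul]
        exact Finset.sum_congr rfl fun i _ => by rw [Finset.sum_mul]
      have hB : (∑ i, ∑ m, C i m p * C i m q) * D q p
          = ∑ i, ∑ m, C i m p * C i m q * D q p := by
        rw [Finset.sum_mul]
        exact Finset.sum_congr rfl fun i _ => by rw [Finset.sum_mul]
      calc Ric l p q * D q p
          = -(1/2) * ((∑ i, ∑ m, C i p m * C i q m) * D q p)
            + (1/4) * ((∑ i, ∑ m, C i m p * C i m q) * D q p) := by
            rw [ric_apply]; ring
        _ = _ := by rw [hA, hB]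
    rw [tr1, Finset.sum_congr rfl fun p _ => Finset.sum_congr rfl fun q _ => per p q]
    rw [hE1, hE2, Finset.mul_sum, Finset.mul_sum, ← Finset.sum_add_distrib]
    refine Finset.sum_congr rfl fun p _ => ?_
    rw [Finset.mul_sum, Finset.mul_sum, ← Finset.sum_add_distrib]
  rw [htr, key]; ring

lemma innV_pos (l : (Fin n → ℝ) → (Fin n → ℝ) → (Fin n → ℝ)) (hl : IsSkewBil l)
    (hne : l ≠ (fun _ _ => 0)) : 0 < innV l l := by
  have hex : ∃ i j k, cs l i j k ≠ 0 := by
    by_contra hall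
    push_neg at hall
    apply hne
    funext x y
    ext k
    rw [expand l hl x y k]
    simp [hall]
  obtain ⟨i, j, k, hijk⟩ := hex
  have h3 : 0 < ∑ k', cs l i j k' * cs l i j k' :=
    Finset.sum_pos' (fun _ _ => mul_self_nonneg _)
      ⟨k, Finset.mem_univ k, mul_self_pos.mpr hijk⟩
  have h2 : 0 < ∑ j', ∑ k', cs l i j' k' * cs l i j' k' :=
    Finset.sum_pos' (fun _ _ => Finset.sum_nonneg fun _ _ => mul_self_nonneg _)
      ⟨j, Finset.mem_univ j, h3⟩
  have h1 : 0 < ∑ i', ∑ j', ∑ k', cs l i' j' k' * cs l i' j' k' :=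
    Finset.sum_pos'
      (fun _ _ => Finset.sum_nonneg fun _ _ => Finset.sum_nonneg fun _ _ => mul_self_nonneg _)
      ⟨i, Finset.mem_univ i, h2⟩
  exact h1

lemma trace_ric_sq (l : (Fin n → ℝ) → (Fin n → ℝ) → (Fin n → ℝ)) :
    (Ric l * Ric l).trace = ∑ p, ∑ q, Ric l p q * Ric l p q := by
  simp only [Matrix.trace, Matrix.diag, Matrix.mul_apply]
  exact Finset.sum_congr rfl fun p _ => Finset.sum_congr rfl fun q _ => by
    rw [ric_symm l q p]

end S19

/-- if `Ric_λ + cI` is a derivation of `(ℝⁿ,λ)` with `λ ≠ 0`,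
then `c = 4 tr(Ric_λ²)/‖λ‖² > 0`. -/
theorem stmt19 {n : ℕ} (l : (Fin n → ℝ) → (Fin n → ℝ) → (Fin n → ℝ))
    (hl : IsSkewBil l) (hne : l ≠ (fun _ _ => 0)) (c : ℝ)
    (hD : IsDeriv l (Ric l + c • (1 : Matrix (Fin n) (Fin n) ℝ))) :
    c = 4 * (Ric l * Ric l).trace / innV l l ∧ 0 < c := by
  have hP : 0 < innV l l := S19.innV_pos l hl hne
  have h0 := S19.trace_ric_deriv l hl _ hD
  have hsplit : (Ric l * (Ric l + c • (1 : Matrix (Fin n) (Fin n) ℝ))).trace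
      = (Ric l * Ric l).trace + c * (Ric l).trace := by
    rw [Matrix.mul_add, Matrix.trace_add, Matrix.mul_smul, Matrix.mul_one, Matrix.trace_smul,
      smul_eq_mul]
  rw [hsplit, S19.trace_ric l] at h0
  -- h0 : tr(Ric²) + c * (-(1/4) * innV) = 0
  have heq : (Ric l * Ric l).trace = c * innV l l / 4 := by linarith
  have hc : c = 4 * (Ric l * Ric l).trace / innV l l := by
    field_simp [ne_of_gt hP]
    linarith [heq]
  refine ⟨hc, ?_⟩
  by_contra hcle
  push_neg at hcle
  have hS0 : (Ric l * Ric l).trace = 0 := by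
    have hle : (Ric l * Ric l).trace ≤ 0 := by
      rw [heq]
      have : c * innV l l ≤ 0 := mul_nonpos_of_nonpos_of_nonneg hcle (le_of_lt hP)
      linarith
    have hge : 0 ≤ (Ric l * Ric l).trace := by
      rw [S19.trace_ric_sq]
      exact Finset.sum_nonneg fun _ _ => Finset.sum_nonneg fun _ _ => mul_self_nonneg _
    linarith
  have hz : ∀ p q, Ric l p q = 0 := by
    rw [S19.trace_ric_sq] at hS0
    have h1 := (Finset.sum_eq_zero_iff_of_nonneg
      (fun p _ => Finset.sum_nonneg fun q _ => mul_self_nonneg (Ric l p q))).mp hS0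
    intro p q
    have h2 := (Finset.sum_eq_zero_iff_of_nonneg
      (fun q _ => mul_self_nonneg (Ric l p q))).mp (h1 p (Finset.mem_univ p)) q
      (Finset.mem_univ q)
    exact mul_self_eq_zero.mp h2
  have htr0 : (Ric l).trace = 0 := by
    simp only [Matrix.trace, Matrix.diag]
    exact Finset.sum_eq_zero fun p _ => hz p p
  rw [S19.trace_ric l] at htr0
  linarith
end
end
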